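/- arXiv:2001.02189 — 2 statements merged into one kernel-verified Lean document; each statement's English description precedes it below -/
import Mathlib

section
/- For every n ≥ 2, the hypercube Q_n satisfies gp(Q_n\bar{Q}_n) = 2^n. -/
open SimpleGraph

variable {V : Type*}

/-- `v` lies on a geodesic (shortest path) between `u` and `w` in `G`. -/
def liesOnGeodesic (G : SimpleGraph V) (u v w : V) : Prop :=
  G.Reachable u w ∧ G.dist u v + G.dist v w = G.dist u w

/-- `S` is a general position set in `G`: no element of `S` lies on a geodesic
between two other elements of `S`. -/
def isGenPosSet (G : SimpleGraph V) (S : Set V) : Prop :=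
  ∀ u ∈ S, ∀ v ∈ S, ∀ w ∈ S, u ≠ v → v ≠ w → u ≠ w → ¬ liesOnGeodesic G u v w

/-- The general position number `gp(G)` of `G`. -/
noncomputable def gpNum (G : SimpleGraph V) : ℕ :=
  sSup {n : ℕ | ∃ S : Set V, isGenPosSet G S ∧ S.ncard = n}

/-- `S` is a `3`-general position set in `G`: no three vertices of `S` lie on a
common geodesic of length at most `3`. -/
def isGP3Set (G : SimpleGraph V) (S : Set V) : Prop :=
  ∀ u ∈ S, ∀ v ∈ S, ∀ w ∈ S, u ≠ v → v ≠ w → u ≠ w →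
    ¬ (liesOnGeodesic G u v w ∧ G.dist u w ≤ 3)

/-- The `3`-general position number `gp₃(G)` of `G`. -/
noncomputable def gp3Num (G : SimpleGraph V) : ℕ :=
  sSup {n : ℕ | ∃ S : Set V, isGP3Set G S ∧ S.ncard = n}

/-- The complementary prism `G\bar{G}`: the disjoint union of `G` (left copy) and
its complement `Gᶜ` (right copy), together with the perfect matching joining each
vertex to its copy. -/
def compPrism (G : SimpleGraph V) : SimpleGraph (V ⊕ V) where
  Adj x y :=
    match x, y with
    | Sum.inl a, Sum.inl b => G.Adj a b
    | Sum.inr a, Sum.inr b => Gᶜ.Adj a b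
    | Sum.inl a, Sum.inr b => a = b
    | Sum.inr a, Sum.inl b => a = b
  symm := by
    constructor
    rintro (a | a) (b | b) h
    · exact (G.adj_comm a b).mp h
    · exact Eq.symm h
    · exact Eq.symm h
    · exact (Gᶜ.adj_comm a b).mp h
  loopless := by
    constructor
    rintro (a | a) h
    · exact G.loopless.irrefl a h
    · exact Gᶜ.loopless.irrefl a h

/-- The eccentricity of a vertex: the maximum distance to another vertex. -/
noncomputable def ecc (G : SimpleGraph V) (v : V) : ℕ :=
  sSup (Set.range (G.dist v))

/-- The radius of a graph: the minimum eccentricity. -/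
noncomputable def rad (G : SimpleGraph V) : ℕ :=
  sInf (Set.range (ecc G))

/-- The diameter of a graph: the maximum distance between two vertices. -/
noncomputable def graphDiam (G : SimpleGraph V) : ℕ :=
  sSup {n : ℕ | ∃ u v : V, G.dist u v = n}

/-- `\bar{gp}₃(G)`: the maximum, over all `gp₃`-sets `S` of `G`, of the `3`-general
position number of the subgraph of `Gᶜ` induced by the vertices outside `S`. -/
noncomputable def barGp3 (G : SimpleGraph V) : ℕ :=
  sSup {n : ℕ | ∃ S : Set V, isGP3Set G S ∧ S.ncard = gp3Num G ∧
          gp3Num ((Gᶜ).induce Sᶜ) = n}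

/-- A cut vertex: its removal disconnects the graph. -/
def isCutVertex (G : SimpleGraph V) (v : V) : Prop :=
  ¬ (G.induce {u : V | u ≠ v}).Connected

/-- `B` is the vertex set of a `2`-connected subgraph of `G`:
it has at least `3` vertices and removing any one vertex leaves it connected. -/
def isTwoConnectedSet (G : SimpleGraph V) (B : Set V) : Prop :=
  3 ≤ B.ncard ∧ ∀ v ∈ B, (G.induce (B \ {v})).Connected

/-- A block graph: every maximal `2`-connected subgraph is a clique. -/
def isBlockGraph (G : SimpleGraph V) : Prop :=
  ∀ B : Set V, isTwoConnectedSet G B →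
    (∀ B' : Set V, isTwoConnectedSet G B' → B ⊆ B' → B = B') →
    G.IsClique B

/-- Complete multipartite graph: the vertices can be partitioned (via an
equivalence relation, whose classes are the parts) so that two vertices are
adjacent iff they lie in different parts. -/
def isCompleteMultipartite (G : SimpleGraph V) : Prop :=
  ∃ r : V → V → Prop, Equivalence r ∧ ∀ u v, G.Adj u v ↔ ¬ r u v

/-- The hypercube `Q_n`: binary strings of length `n`, two strings being
adjacent when they differ in exactly one coordinate. -/
def hypercube (n : ℕ) : SimpleGraph (Fin n → Bool) where
  Adj x y := {i : Fin n | x i ≠ y i}.ncard = 1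
  symm := by
    constructor
    intro x y h
    simpa [ne_comm] using h
  loopless := by
    constructor
    intro x
    simp

/-- The block graph `G_k`: a chain of `k+1` triangles `{vᵢ, uᵢ, vᵢ₊₁}`,
with the `v`-vertices `v₁, …, v_{k+2}` indexed by `Fin (k+2)` (left summand)
and the `u`-vertices `u₁, …, u_{k+1}` indexed by `Fin (k+1)` (right summand);
the edges are `vᵢvᵢ₊₁`, `uᵢvᵢ` and `uᵢvᵢ₊₁`. -/
def Gk (k : ℕ) : SimpleGraph (Fin (k + 2) ⊕ Fin (k + 1)) where
  Adj x y :=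
    match x, y with
    | Sum.inl a, Sum.inl b => a.val + 1 = b.val ∨ b.val + 1 = a.val
    | Sum.inl a, Sum.inr b => a.val = b.val ∨ a.val = b.val + 1
    | Sum.inr a, Sum.inl b => b.val = a.val ∨ b.val = a.val + 1
    | Sum.inr _, Sum.inr _ => False
  symm := by
    constructor
    rintro (a | a) (b | b) h
    · exact Or.symm h
    · exact h
    · exact h
    · exact h
  loopless := by
    constructor
    rintro (a | a) h
    · omega
    · exact h


/-!
In `G Ḡ` two vertices in different copies are at distance `2` unless they are the two copies of
one vertex. If a general position set `S` contains both copies `v, v̄` of a vertex, then, `v` and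
`v̄` being adjacent, every other member of `S` is equidistant from them, hence at distance `2` from
the copy of `v` on its own side: its `G`-distance (resp. `Ḡ`-distance) to `v` is `2`. So no other
vertex has both copies in `S`, and in `Q_n` some vertex has neither: one at Hamming distance `3`
from `v` if `n ≥ 3`, a neighbour of `v` if `n = 2`. Hence `|S| ≤ 2^n`.

Conversely, for a proper `2`-colouring of `G`, take the `G`-copy of one colour class and the
`Ḡ`-copy of the other. Distances among these `|V|` vertices are `1` inside the `Ḡ` part, `2`
across, and `2` or `3` inside the `G` part, so none is the sum of two others. `Q_n` is coloured by
the parity of the Hamming weight.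
-/

open SimpleGraph Sum

lemma SimpleGraph.dist_eq_two_iff {G : SimpleGraph V} {u v : V} :
    G.dist u v = 2 ↔ u ≠ v ∧ ¬G.Adj u v ∧ (G.commonNeighbors u v).Nonempty := by
  rw [← edist_eq_two_iff]
  constructor
  · intro h
    rw [← (Reachable.of_dist_ne_zero (by omega)).coe_dist_eq_edist, h]
    rfl
  · intro h
    simp [dist, h]

lemma Set.ncard_eq_ncard_preimage_inl_add_ncard_preimage_inr {α β : Type*} [Finite α] [Finite β]
    (s : Set (α ⊕ β)) : s.ncard = (inl ⁻¹' s).ncard + (inr ⁻¹' s).ncard := by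
  conv_lhs => rw [← image_preimage_inl_union_image_preimage_inr s]
  rw [ncard_union_eq Set.disjoint_image_inl_image_inr, ncard_image_of_injective _ inl_injective,
    ncard_image_of_injective _ inr_injective]

lemma Set.ncard_add_ncard_le_of_ncard_inter_le {α : Type*} [Finite α] {s t : Set α}
    (h : (s ∩ t).ncard ≤ (s ∪ t)ᶜ.ncard) : s.ncard + t.ncard ≤ Nat.card α := by
  rw [← ncard_union_add_ncard_inter, ← ncard_add_ncard_compl (s ∪ t)]
  omega

lemma gpNum_eq_of_isGreatest {G : SimpleGraph V} {k : ℕ}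
    (h : IsGreatest {n | ∃ S : Set V, isGenPosSet G S ∧ S.ncard = n} k) : gpNum G = k :=
  h.csSup_eq

lemma isGenPosSet.dist_eq_of_adj {G : SimpleGraph V} {S : Set V} (hS : isGenPosSet G S)
    {x y y' : V} (hx : x ∈ S) (hy : y ∈ S) (hy' : y' ∈ S) (hxy : x ≠ y) (hxy' : x ≠ y')
    (hadj : G.Adj y y') : G.dist x y = G.dist x y' := by
  have hd := dist_eq_one_iff_adj.mpr hadj
  have hd' := dist_eq_one_iff_adj.mpr hadj.symm
  rcases hadj.diff_dist_adj (u := x) with h | h | h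
  · exact h.symm
  · exact absurd ⟨Reachable.of_dist_ne_zero (by omega), by omega⟩
      (hS x hx y hy y' hy' hxy hadj.ne hxy')
  · by_cases h0 : G.dist x y = 0
    · omega
    · exact absurd ⟨Reachable.of_dist_ne_zero h0, by omega⟩
        (hS x hx y' hy' y hy hxy' hadj.ne.symm hxy)

section CompPrism

variable {G : SimpleGraph V} {u v : V}

@[simp] lemma compPrism_adj_inl_inl : (compPrism G).Adj (inl u) (inl v) ↔ G.Adj u v := Iff.rfl
@[simp] lemma compPrism_adj_inr_inr : (compPrism G).Adj (inr u) (inr v) ↔ Gᶜ.Adj u v := Iff.rfl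
@[simp] lemma compPrism_adj_inl_inr : (compPrism G).Adj (inl u) (inr v) ↔ u = v := Iff.rfl
@[simp] lemma compPrism_adj_inr_inl : (compPrism G).Adj (inr u) (inl v) ↔ u = v := Iff.rfl

lemma compPrism_exists_walk_inl_inr (u v : V) :
    ∃ p : (compPrism G).Walk (inl u) (inr v), p.length ≤ 2 := by
  by_cases huv : u = v
  · subst huv
    exact ⟨.cons (by simp) .nil, by simp⟩
  by_cases hadj : G.Adj u v
  · exact ⟨.cons (compPrism_adj_inl_inl.mpr hadj) (.cons (by simp) .nil), by simp⟩
  · exact ⟨.cons (by simp) (.cons (compPrism_adj_inr_inr.mpr ⟨huv, hadj⟩) .nil), by simp⟩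

lemma compPrism_exists_walk (x y : V ⊕ V) : ∃ p : (compPrism G).Walk x y, p.length ≤ 3 := by
  rcases x with u | u <;> rcases y with v | v
  · obtain ⟨p, hp⟩ := compPrism_exists_walk_inl_inr (G := G) u v
    exact ⟨p.concat (by simp), by simp; omega⟩
  · obtain ⟨p, hp⟩ := compPrism_exists_walk_inl_inr (G := G) u v
    exact ⟨p, by omega⟩
  · obtain ⟨p, hp⟩ := compPrism_exists_walk_inl_inr (G := G) v u
    exact ⟨p.reverse, by simp; omega⟩
  · obtain ⟨p, hp⟩ := compPrism_exists_walk_inl_inr (G := G) u v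
    exact ⟨.cons (by simp) p, by simp; omega⟩

lemma compPrism_preconnected : (compPrism G).Preconnected := fun x y ↦
  (compPrism_exists_walk x y).elim fun p _ ↦ p.reachable

lemma compPrism_dist_le_three (x y : V ⊕ V) : (compPrism G).dist x y ≤ 3 :=
  (compPrism_exists_walk x y).elim fun p hp ↦ (dist_le p).trans hp

lemma compPrism_dist_inl_inr (huv : u ≠ v) : (compPrism G).dist (inl u) (inr v) = 2 := by
  obtain ⟨p, hp⟩ := compPrism_exists_walk_inl_inr (G := G) u v
  refine le_antisymm ((dist_le p).trans hp) ?_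
  exact (compPrism_preconnected _ _).one_lt_dist_of_ne_of_not_adj (by simp) (by simpa using huv)

lemma compPrism_dist_inr_inl (huv : u ≠ v) : (compPrism G).dist (inr u) (inl v) = 2 := by
  rw [dist_comm]
  exact compPrism_dist_inl_inr huv.symm

lemma compPrism_dist_inl_inl_eq_two_iff :
    (compPrism G).dist (inl u) (inl v) = 2 ↔ G.dist u v = 2 := by
  simp only [dist_eq_two_iff, ne_eq, inl.injEq, compPrism_adj_inl_inl]
  refine and_congr_right fun huv ↦ and_congr_right fun _ ↦
    ⟨?_, fun ⟨w, hw⟩ ↦ ⟨inl w, by simpa [mem_commonNeighbors] using hw⟩⟩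
  rintro ⟨w | w, hw⟩
  · exact ⟨w, by simpa [mem_commonNeighbors] using hw⟩
  · simp only [mem_commonNeighbors, compPrism_adj_inl_inr] at hw
    exact absurd (hw.1.trans hw.2.symm) huv

lemma compPrism_dist_inr_inr_eq_two_iff :
    (compPrism G).dist (inr u) (inr v) = 2 ↔ Gᶜ.dist u v = 2 := by
  simp only [dist_eq_two_iff, ne_eq, inr.injEq, compPrism_adj_inr_inr]
  refine and_congr_right fun huv ↦ and_congr_right fun _ ↦
    ⟨?_, fun ⟨w, hw⟩ ↦ ⟨inr w, by simpa [mem_commonNeighbors] using hw⟩⟩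
  rintro ⟨w | w, hw⟩
  · simp only [mem_commonNeighbors, compPrism_adj_inr_inl] at hw
    exact absurd (hw.1.trans hw.2.symm) huv
  · exact ⟨w, by simpa [mem_commonNeighbors] using hw⟩

end CompPrism

lemma ncard_le_of_isGenPosSet_compPrism [Finite V] {G : SimpleGraph V} {S : Set (V ⊕ V)}
    (hG : ∀ v, ∃ u ≠ v, G.dist u v ≠ 2 ∧ Gᶜ.dist u v ≠ 2)
    (hS : isGenPosSet (compPrism G) S) : S.ncard ≤ Nat.card V := by
  rw [Set.ncard_eq_ncard_preimage_inl_add_ncard_preimage_inr]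
  apply Set.ncard_add_ncard_le_of_ncard_inter_le
  rcases (inl ⁻¹' S ∩ inr ⁻¹' S).eq_empty_or_nonempty with hempty | ⟨v, hl, hr⟩
  · simp [hempty]
  have hl2 (u : V) (huv : u ≠ v) (hu : inl u ∈ S) : G.dist u v = 2 :=
    compPrism_dist_inl_inl_eq_two_iff.mp <| (hS.dist_eq_of_adj hu hl hr (by simpa) (by simp)
      (by simp)).trans (compPrism_dist_inl_inr huv)
  have hr2 (u : V) (huv : u ≠ v) (hu : inr u ∈ S) : Gᶜ.dist u v = 2 :=
    compPrism_dist_inr_inr_eq_two_iff.mp <| (hS.dist_eq_of_adj hu hr hl (by simpa) (by simp)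
      (by simp)).trans (compPrism_dist_inr_inl huv)
  have hinter : inl ⁻¹' S ∩ inr ⁻¹' S ⊆ {v} := by
    rintro w ⟨hwl, hwr⟩
    by_contra hwv
    have hG2 := dist_eq_two_iff.mp (hl2 w hwv hwl)
    exact (dist_eq_two_iff.mp (hr2 w hwv hwr)).2.1 ((G.compl_adj w v).mpr ⟨hwv, hG2.2.1⟩)
  obtain ⟨u, huv, hu, hu'⟩ := hG v
  have hout : u ∈ (inl ⁻¹' S ∪ inr ⁻¹' S)ᶜ := by
    rintro (h | h)
    · exact hu (hl2 u huv h)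
    · exact hu' (hr2 u huv h)
  calc (inl ⁻¹' S ∩ inr ⁻¹' S).ncard ≤ ({v} : Set V).ncard := Set.ncard_le_ncard hinter
    _ = 1 := Set.ncard_singleton v
    _ ≤ _ := (Set.ncard_pos).mpr ⟨u, hout⟩

section Coloring

variable {G : SimpleGraph V} (C : G.Coloring Bool)

def compPrismTransversal (v : V) : V ⊕ V := bif C v then inr v else inl v

lemma compPrismTransversal_injective : Function.Injective (compPrismTransversal C) := by
  intro a b h
  cases ha : C a <;> cases hb : C b <;> simp_all [compPrismTransversal]

lemma dist_compPrismTransversal_mem_Icc {a b : V} (hab : a ≠ b) :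
    (compPrism G).dist (compPrismTransversal C a) (compPrismTransversal C b) ∈
      Set.Icc (1 + max (!C a).toNat (!C b).toNat) (1 + (!C a).toNat + (!C b).toNat) := by
  cases ha : C a <;> cases hb : C b <;> simp only [compPrismTransversal, ha, hb, cond_true,
    cond_false, Bool.not_true, Bool.not_false, Bool.toNat_true, Bool.toNat_false, Set.mem_Icc]
  · have hnadj : ¬G.Adj a b := fun h ↦ C.valid h (ha.trans hb.symm)
    exact ⟨(compPrism_preconnected _ _).one_lt_dist_of_ne_of_not_adj (by simpa using hab) hnadj,
      compPrism_dist_le_three _ _⟩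
  · simp [compPrism_dist_inl_inr hab]
  · simp [compPrism_dist_inr_inl hab]
  · have hadj : Gᶜ.Adj a b :=
      (G.compl_adj a b).mpr ⟨hab, fun h ↦ C.valid h (ha.trans hb.symm)⟩
    simp [dist_eq_one_iff_adj.mpr (compPrism_adj_inr_inr.mpr hadj)]

lemma isGenPosSet_range_compPrismTransversal :
    isGenPosSet (compPrism G) (Set.range (compPrismTransversal C)) := by
  rintro _ ⟨a, rfl⟩ _ ⟨b, rfl⟩ _ ⟨c, rfl⟩ hab hbc hac ⟨-, hgeo⟩
  obtain ⟨hab₁, -⟩ := dist_compPrismTransversal_mem_Icc C (ne_of_apply_ne _ hab)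
  obtain ⟨hbc₁, -⟩ := dist_compPrismTransversal_mem_Icc C (ne_of_apply_ne _ hbc)
  obtain ⟨-, hac₂⟩ := dist_compPrismTransversal_mem_Icc C (ne_of_apply_ne _ hac)
  -- the two lower bounds already add up to more than the upper bound for `a, c`
  omega

end Coloring

lemma gpNum_compPrism_eq_card [Finite V] {G : SimpleGraph V} (C : G.Coloring Bool)
    (hG : ∀ v, ∃ u ≠ v, G.dist u v ≠ 2 ∧ Gᶜ.dist u v ≠ 2) :
    gpNum (compPrism G) = Nat.card V := by
  refine gpNum_eq_of_isGreatest ⟨⟨_, isGenPosSet_range_compPrismTransversal C,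
    Set.ncard_range_of_injective (compPrismTransversal_injective C)⟩, ?_⟩
  rintro _ ⟨S, hS, rfl⟩
  exact ncard_le_of_isGenPosSet_compPrism hG hS

lemma natCast_hammingDist_eq_add {ι : Type*} [Fintype ι] (x y z : ι → Bool) :
    (hammingDist x y : ZMod 2) = hammingDist x z + hammingDist z y := by
  simp only [hammingDist, Finset.natCast_card_filter, ← Finset.sum_add_distrib]
  refine Finset.sum_congr rfl fun i _ ↦ ?_
  cases x i <;> cases y i <;> cases z i <;> decide

section Hypercube

variable {n : ℕ}

lemma hypercube_adj_iff {x y : Fin n → Bool} : (hypercube n).Adj x y ↔ hammingDist x y = 1 := by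
  change {i | x i ≠ y i}.ncard = 1 ↔ _
  rw [hammingDist, ← Set.ncard_coe_finset, Finset.coe_filter_univ]

def hypercubeColoring (n : ℕ) : (hypercube n).Coloring Bool :=
  Coloring.mk (fun x ↦ decide ((hammingDist x fun _ ↦ false : ZMod 2) = 1)) fun {x y} hxy ↦ by
    have h := natCast_hammingDist_eq_add x y fun _ ↦ false
    rw [hypercube_adj_iff.mp hxy, hammingDist_comm _ y] at h
    revert h
    generalize (hammingDist x fun _ ↦ false : ZMod 2) = a
    generalize (hammingDist y fun _ ↦ false : ZMod 2) = b
    revert a b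
    decide

lemma exists_hammingDist_eq (v : Fin n → Bool) {k : ℕ} (hk : k ≤ n) :
    ∃ u, hammingDist u v = k := by
  refine ⟨fun i ↦ if (i : ℕ) < k then !v i else v i, ?_⟩
  have hcard := Fin.card_filter_val_lt (n := n) (m := k)
  rw [min_eq_right hk] at hcard
  conv_rhs => rw [← hcard]
  rw [hammingDist]
  congr 1
  ext i
  by_cases hi : (i : ℕ) < k <;> simp [hi]

lemma hypercube_dist_ne_two_of_three_le {u v : Fin n → Bool} (h : 3 ≤ hammingDist u v) :
    (hypercube n).dist u v ≠ 2 := by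
  rw [Ne, dist_eq_two_iff]
  rintro ⟨-, -, w, hw⟩
  rw [mem_commonNeighbors, hypercube_adj_iff, hypercube_adj_iff, hammingDist_comm v] at hw
  have := hammingDist_triangle u w v
  omega

lemma hypercube_two_compl_dist_ne_two {u v : Fin 2 → Bool} (h : hammingDist u v = 1) :
    (hypercube 2)ᶜ.dist u v ≠ 2 := by
  rw [Ne, dist_eq_two_iff]
  rintro ⟨-, -, w, hw⟩
  simp only [mem_commonNeighbors, compl_adj, hypercube_adj_iff, ne_eq] at hw
  -- a common neighbour in `Q̄₂` is antipodal to both `u` and `v`, contradicting parity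
  have hQ₂ (x y : Fin 2 → Bool) (hxy : x ≠ y) (h1 : hammingDist x y ≠ 1) :
      hammingDist x y = 2 := by
    have hle : hammingDist x y ≤ 2 := hammingDist_le_card_fintype.trans_eq (Fintype.card_fin 2)
    have hpos := hammingDist_pos.mpr hxy
    omega
  have huw := hQ₂ u w hw.1.1 hw.1.2
  have hwv := hQ₂ w v (Ne.symm hw.2.1) (by rw [hammingDist_comm]; exact hw.2.2)
  have hparity := natCast_hammingDist_eq_add u v w
  rw [h, huw, hwv] at hparity
  exact absurd hparity (by decide)

lemma hypercube_exists_dist_ne_two (hn : 2 ≤ n) (v : Fin n → Bool) :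
    ∃ u ≠ v, (hypercube n).dist u v ≠ 2 ∧ (hypercube n)ᶜ.dist u v ≠ 2 := by
  obtain rfl | hn := hn.eq_or_lt
  · obtain ⟨u, hu⟩ := exists_hammingDist_eq v (show 1 ≤ 2 by norm_num)
    have hadj : (hypercube 2).Adj u v := hypercube_adj_iff.mpr hu
    exact ⟨u, hadj.ne, by simp [dist_eq_one_iff_adj.mpr hadj],
      hypercube_two_compl_dist_ne_two hu⟩
  · obtain ⟨u, hu⟩ := exists_hammingDist_eq v hn
    have huv : u ≠ v := hammingDist_ne_zero.mp (by omega)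
    have hadj : (hypercube n)ᶜ.Adj u v :=
      ((hypercube n).compl_adj u v).mpr ⟨huv, fun h ↦ by rw [hypercube_adj_iff] at h; omega⟩
    exact ⟨u, huv, hypercube_dist_ne_two_of_three_le hu.ge,
      by simp [dist_eq_one_iff_adj.mpr hadj]⟩

end Hypercube

/-- For `n ≥ 2`, the hypercube satisfies `gp(Q_n \bar{Q}_n) = 2 ^ n`. -/
theorem gp_compPrism_hypercube (n : ℕ) (hn : 2 ≤ n) :
    gpNum (compPrism (hypercube n)) = 2 ^ n := by
  rw [gpNum_compPrism_eq_card (hypercubeColoring n) (hypercube_exists_dist_ne_two hn)]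
  simp
end

section
/- For every k ≥ 0, the graph G_k satisfies gp₃(G_k) = k + 3, where G_k is the block graph with vertex set {v_1, …, v_{k+2}} ∪ {u_1, …, u_{k+1}} whose edges are v_i v_{i+1}, u_i v_i and u_i v_{i+1} for 1 ≤ i ≤ k+1. -/
open SimpleGraph

variable {V : Type*}

/-
Indexing from 1, every vertex except the cut vertices `v₂, …, v_{k+1}` is simplicial (its
neighbourhood is a clique), and a simplicial vertex is never an inner vertex of a geodesic; so the
`k + 1` vertices `uᵢ` together with `v₁` and `v_{k+2}` form a general position set. Conversely, a
`3`-general position set `S` contains no induced path `x – y – z`. This rules out `u_{i-1}, vᵢ, uᵢ`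
and `u_{i-1}, vᵢ, v_{i+1}` in `S`, and hence `uᵢ ↦ i`, `vᵢ ↦ i` if `u_{i-1} ∈ S` and `vᵢ ↦ i - 1`
otherwise is injective on `S`, with values in `{0, …, k + 2}`.
-/

section General

variable {G : SimpleGraph V} {S : Set V} {x y z : V}

lemma liesOnGeodesic.reachable_left (h : liesOnGeodesic G x y z) (hxz : x ≠ z) :
    G.Reachable x y := by
  by_contra hxy
  have hyz : G.Reachable y z := by
    apply Reachable.of_dist_ne_zero
    have := h.1.pos_dist_of_ne hxz
    have := h.2
    simp only [dist_eq_zero_of_not_reachable hxy] at this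
    omega
  exact hxy (h.1.trans hyz.symm)

lemma liesOnGeodesic.symm (h : liesOnGeodesic G x y z) : liesOnGeodesic G z y x :=
  ⟨h.1.symm, by
    rw [dist_comm (u := z) (v := y), dist_comm (u := y) (v := x), dist_comm (u := z) (v := x),
      add_comm]
    exact h.2⟩

lemma liesOnGeodesic.reachable_right (h : liesOnGeodesic G x y z) (hxz : x ≠ z) :
    G.Reachable y z :=
  (h.symm.reachable_left hxz.symm).symm

/-- A geodesic through `y` enters and leaves it through two neighbours of `y`; if these are
adjacent or equal, the geodesic can be shortcut. -/
lemma not_liesOnGeodesic_of_isClique_neighborSet (hy : G.IsClique (G.neighborSet y))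
    (hxy : x ≠ y) (hyz : y ≠ z) (hxz : x ≠ z) : ¬ liesOnGeodesic G x y z := by
  intro h
  obtain ⟨p, hp⟩ := (h.reachable_left hxz).symm.exists_walk_length_eq_dist
  obtain ⟨q, hq⟩ := (h.reachable_right hxz).exists_walk_length_eq_dist
  obtain ⟨a, hya, p, rfl⟩ := Walk.exists_eq_cons_of_ne hxy.symm p
  obtain ⟨b, hyb, q, rfl⟩ := Walk.exists_eq_cons_of_ne hyz q
  have hsum := h.2
  rw [dist_comm (u := x), ← hp, ← hq] at hsum
  simp only [Walk.length_cons] at hsum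
  by_cases hab : a = b
  · subst hab
    have := dist_le (p.reverse.append q)
    simp only [Walk.length_append, Walk.length_reverse] at this
    omega
  · have := dist_le (p.reverse.append (.cons (hy hya hyb hab) q))
    simp only [Walk.length_append, Walk.length_reverse, Walk.length_cons] at this
    omega

lemma isGP3Set_of_forall_isClique_neighborSet (hS : ∀ y ∈ S, G.IsClique (G.neighborSet y)) :
    isGP3Set G S :=
  fun _ _ y hy _ _ hxy hyz hxz h =>
    not_liesOnGeodesic_of_isClique_neighborSet (hS y hy) hxy hyz hxz h.1

lemma isGP3Set.adj_of_adj_of_adj (hS : isGP3Set G S) (hx : x ∈ S) (hy : y ∈ S) (hz : z ∈ S)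
    (hxy : G.Adj x y) (hyz : G.Adj y z) (hxz : x ≠ z) : G.Adj x z := by
  by_contra hnadj
  have hreach : G.Reachable x z := hxy.reachable.trans hyz.reachable
  have hdist : G.dist x z = 2 :=
    le_antisymm (dist_le (.cons hxy (.cons hyz .nil)))
      (hreach.one_lt_dist_of_ne_of_not_adj hxz hnadj)
  refine hS x hx y hy z hz hxy.ne hyz.ne hxz ⟨⟨hreach, ?_⟩, by omega⟩
  simp [dist_eq_one_iff_adj.mpr hxy, dist_eq_one_iff_adj.mpr hyz, hdist]

lemma gp3Num_eq_of_forall_ncard_le {n : ℕ} (hS : isGP3Set G S) (hcard : S.ncard = n)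
    (hmax : ∀ T, isGP3Set G T → T.ncard ≤ n) : gp3Num G = n :=
  IsGreatest.csSup_eq ⟨⟨S, hS, hcard⟩, by rintro _ ⟨T, hT, rfl⟩; exact hmax T hT⟩

end General

namespace Gk

variable {k : ℕ}

@[simp] lemma adj_inl_inl {a b : Fin (k + 2)} :
    (Gk k).Adj (.inl a) (.inl b) ↔ a.val + 1 = b.val ∨ b.val + 1 = a.val := Iff.rfl

@[simp] lemma adj_inl_inr {a : Fin (k + 2)} {i : Fin (k + 1)} :
    (Gk k).Adj (.inl a) (.inr i) ↔ a.val = i.val ∨ a.val = i.val + 1 := Iff.rfl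

@[simp] lemma adj_inr_inl {a : Fin (k + 2)} {i : Fin (k + 1)} :
    (Gk k).Adj (.inr i) (.inl a) ↔ a.val = i.val ∨ a.val = i.val + 1 := Iff.rfl

@[simp] lemma not_adj_inr_inr {i j : Fin (k + 1)} : ¬ (Gk k).Adj (.inr i) (.inr j) := id

def simplicialVertices (k : ℕ) : Set (Fin (k + 2) ⊕ Fin (k + 1)) :=
  insert (.inl 0) (insert (.inl (Fin.last (k + 1))) (Set.range .inr))

lemma isClique_neighborSet_of_mem_simplicialVertices {x : Fin (k + 2) ⊕ Fin (k + 1)}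
    (hx : x ∈ simplicialVertices k) : (Gk k).IsClique ((Gk k).neighborSet x) := by
  rcases hx with rfl | rfl | ⟨i, rfl⟩ <;> rintro (a | a) ha (b | b) hb hab <;>
    simp only [mem_neighborSet, adj_inl_inl, adj_inl_inr, adj_inr_inl, not_adj_inr_inr, ne_eq,
      Sum.inl.injEq, Sum.inr.injEq, Fin.ext_iff, Fin.val_zero, Fin.val_last] at * <;> omega

lemma ncard_simplicialVertices : (simplicialVertices k).ncard = k + 3 := by
  rw [simplicialVertices, Set.ncard_insert_of_notMem, Set.ncard_insert_of_notMem,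
    Set.ncard_range_of_injective Sum.inr_injective, Nat.card_eq_fintype_card, Fintype.card_fin]
  · simp
  · simp [Fin.ext_iff]

section UpperBound

variable {S : Set (Fin (k + 2) ⊕ Fin (k + 1))}

lemma inr_notMem_of_isGP3Set (hS : isGP3Set (Gk k) S) {i j : Fin (k + 1)} {a : Fin (k + 2)}
    (hi : .inr i ∈ S) (ha : .inl a ∈ S) (hai : a.val = i.val + 1) (hja : j.val = a.val) :
    .inr j ∉ S := fun hj =>
  not_adj_inr_inr <| hS.adj_of_adj_of_adj hi ha hj (by simp [hai]) (by simp [hja])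
    (by simp [Fin.ext_iff]; omega)

lemma inl_notMem_of_isGP3Set (hS : isGP3Set (Gk k) S) {i : Fin (k + 1)} {a b : Fin (k + 2)}
    (hi : .inr i ∈ S) (ha : .inl a ∈ S) (hai : a.val = i.val + 1) (hba : b.val = a.val + 1) :
    .inl b ∉ S := fun hb => by
  have := hS.adj_of_adj_of_adj hi ha hb (by simp [hai]) (by simp [hba]) (by simp)
  simp only [adj_inr_inl] at this
  omega

open Classical in
noncomputable def label (S : Set (Fin (k + 2) ⊕ Fin (k + 1))) : Fin (k + 2) ⊕ Fin (k + 1) → ℕ :=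
  Sum.elim (fun a => if ∃ i : Fin (k + 1), i.val + 1 = a.val ∧ .inr i ∈ S then a + 1 else a)
    (fun i => i + 1)

lemma label_lt (x : Fin (k + 2) ⊕ Fin (k + 1)) : label S x < k + 3 := by
  rcases x with a | i
  · have := a.isLt
    simp only [label, Sum.elim_inl]
    split_ifs <;> omega
  · have := i.isLt
    simp only [label, Sum.elim_inr]
    omega

lemma label_inl_ne_label_inr (hS : isGP3Set (Gk k) S) {a : Fin (k + 2)} {j : Fin (k + 1)}
    (ha : .inl a ∈ S) (hj : .inr j ∈ S) : label S (.inl a) ≠ label S (.inr j) := by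
  simp only [label, Sum.elim_inl, Sum.elim_inr]
  split_ifs with h
  · obtain ⟨i, hia, hi⟩ := h
    exact fun heq => inr_notMem_of_isGP3Set hS hi ha hia.symm (by omega) hj
  · exact fun heq => h ⟨j, heq.symm, hj⟩

lemma eq_of_label_inl_eq_label_inl (hS : isGP3Set (Gk k) S) {a b : Fin (k + 2)}
    (ha : .inl a ∈ S) (hb : .inl b ∈ S) (hab : a.val ≤ b.val)
    (heq : label S (.inl a) = label S (.inl b)) : a = b := by
  simp only [label, Sum.elim_inl] at heq
  split_ifs at heq with ha' hb'
  · exact Fin.ext (by omega)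
  · obtain ⟨i, hia, hi⟩ := ha'
    exact (inl_notMem_of_isGP3Set hS hi ha hia.symm (by omega) hb).elim
  · omega
  · exact Fin.ext heq

lemma injOn_label (hS : isGP3Set (Gk k) S) : S.InjOn (label S) := by
  rintro (a | i) hx (b | j) hy heq
  · rcases le_total a.val b.val with hab | hba
    · rw [eq_of_label_inl_eq_label_inl hS hx hy hab heq]
    · rw [eq_of_label_inl_eq_label_inl hS hy hx hba heq.symm]
  · exact (label_inl_ne_label_inr hS hx hy heq).elim
  · exact (label_inl_ne_label_inr hS hy hx heq.symm).elim
  · simp only [label, Sum.elim_inr, Nat.add_right_cancel_iff] at heq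
    rw [Fin.ext heq]

lemma ncard_le_of_isGP3Set (hS : isGP3Set (Gk k) S) : S.ncard ≤ k + 3 :=
  calc S.ncard ≤ (Finset.range (k + 3) : Set ℕ).ncard :=
        Set.ncard_le_ncard_of_injOn _ (fun x _ => by simpa using label_lt x) (injOn_label hS)
          (Finset.finite_toSet _)
    _ = k + 3 := by simp

end UpperBound

end Gk

/-- For every `k ≥ 0`, the chain of `k+1` triangles `G_k` satisfies
`gp₃(G_k) = k + 3`. -/
theorem gp3_Gk (k : ℕ) : gp3Num (Gk k) = k + 3 :=
  gp3Num_eq_of_forall_ncard_le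
    (isGP3Set_of_forall_isClique_neighborSet fun _ =>
      Gk.isClique_neighborSet_of_mem_simplicialVertices)
    Gk.ncard_simplicialVertices (fun _ => Gk.ncard_le_of_isGP3Set)
end
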